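/- arXiv:2211.02338 — 2 statements merged into one kernel-verified Lean document; each statement's English description precedes it below -/
import Mathlib

section
/- For every even integer n ≥ 2, every red-blue edge-coloring of the complete graph on 3n − 1 vertices contains a red copy of the star K_{1,n} or a blue copy of the fan F_n. -/
/-- The fan `F n = K₁ + n·K₂`: vertex 0 is the center, and vertices
`2k+1, 2k+2` form the `k`-th edge of the matching, for `k < n`. -/
def fanGraph (n : ℕ) : SimpleGraph (Fin (2 * n + 1)) where
  Adj v w := v ≠ w ∧ (v = 0 ∨ w = 0 ∨ (v.val - 1) / 2 = (w.val - 1) / 2)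
  symm := by
    constructor
    intro v w h
    obtain ⟨h1, h2⟩ := h
    refine ⟨h1.symm, ?_⟩
    tauto
  loopless := by constructor; intro v h; exact h.1 rfl

/-- `ContainsCopy G H` : `G` contains a subgraph isomorphic to `H`
(an injective map of vertices sending edges of `H` to edges of `G`). -/
def ContainsCopy {α β : Type*} (G : SimpleGraph α) (H : SimpleGraph β) : Prop :=
  ∃ f : β ↪ α, ∀ ⦃a b : β⦄, H.Adj a b → G.Adj (f a) (f b)

/-- The star `K_{1,n}`: vertex 0 is the center. -/
def starGraph (n : ℕ) : SimpleGraph (Fin (n + 1)) where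
  Adj v w := v ≠ w ∧ (v = 0 ∨ w = 0)
  symm := by constructor; intro v w h; exact ⟨h.1.symm, h.2.symm⟩
  loopless := by constructor; intro v h; exact h.1 rfl

/-!
If some vertex has red degree at least `n` it is the centre of a red `K_{1,n}`. Otherwise all red
degrees are at most `n - 1`, and as `3n - 1` and `n - 1` are both odd the red graph cannot be
`(n - 1)`-regular, so some vertex `c` has red degree at most `n - 2`. Its blue neighbourhood `S`
then has at least `2n` vertices, each with at most `n - 1` red and hence at least `n` blue
neighbours inside `S`. A graph of minimum degree at least `n` on at least `2n` vertices has `n`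
disjoint edges: given a smaller matching, take two uncovered vertices; unless one of them has an
uncovered neighbour, all their neighbours lie among the `2k < 2n` matched endpoints, so between them
they see three endpoints of one matching edge, which yields an augmenting path of length three.
These `n` blue edges together with `c` form a blue `F_n`.
-/

open Finset

theorem Function.Injective.update_of_notMem_range {α β : Type*} [DecidableEq α] {f : α → β}
    (hf : Function.Injective f) (a : α) {x : β} (hx : x ∉ Set.range f) :
    Function.Injective (Function.update f a x) := by
  intro p q hpq
  by_cases hp : p = a <;> by_cases hq : q = a
  · exact hp.trans hq.symm
  · rw [hp, Function.update_self, Function.update_of_ne hq] at hpq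
    exact absurd ⟨q, hpq.symm⟩ hx
  · rw [hq, Function.update_self, Function.update_of_ne hp] at hpq
    exact absurd ⟨p, hpq⟩ hx
  · rwa [Function.update_of_ne hp, Function.update_of_ne hq, hf.eq_iff] at hpq

namespace SimpleGraph

variable {V : Type*} {G : SimpleGraph V} {k : ℕ} {a b : Fin k → V} {u v w : V}

structure IsMatchingPairs (G : SimpleGraph V) (a b : Fin k → V) : Prop where
  injective : Function.Injective (Sum.elim a b)
  adj : ∀ i, G.Adj (a i) (b i)

namespace IsMatchingPairs

theorem symm (h : G.IsMatchingPairs a b) : G.IsMatchingPairs b a where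
  injective := by
    rw [← Sum.elim_swap]
    exact h.injective.comp Sum.swap_leftInverse.injective
  adj i := (h.adj i).symm

theorem map {W : Type*} {G' : SimpleGraph W} (f : Copy G G') (h : G.IsMatchingPairs a b) :
    G'.IsMatchingPairs (f ∘ a) (f ∘ b) where
  injective := by rw [← Sum.comp_elim]; exact f.injective.comp h.injective
  adj i := f.toHom.map_adj (h.adj i)

theorem snoc (h : G.IsMatchingPairs a b) (hu : u ∉ Set.range a ∪ Set.range b)
    (hw : w ∉ Set.range a ∪ Set.range b) (huw : G.Adj u w) :
    G.IsMatchingPairs (Fin.snoc a u) (Fin.snoc b w) where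
  injective := by
    have hinj := h.injective
    simp only [Sum.elim_injective, Set.mem_union, Set.mem_range, not_or, not_exists]
      at hinj hu hw ⊢
    refine ⟨Fin.snoc_injective_of_injective hinj.1 (by simpa using hu.1),
      Fin.snoc_injective_of_injective hinj.2.1 (by simpa using hw.2), fun i j => ?_⟩
    induction i using Fin.lastCases <;> induction j using Fin.lastCases <;>
      simp only [Fin.snoc_castSucc, Fin.snoc_last]
    all_goals grind [huw.ne]
  adj := Fin.lastCases (by simpa using huw) (by simpa using h.adj)

theorem update (h : G.IsMatchingPairs a b) (i : Fin k) (hu : u ∉ Set.range a ∪ Set.range b)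
    (hub : G.Adj u (b i)) : G.IsMatchingPairs (Function.update a i u) b where
  injective := by
    classical
    rw [← Sum.update_elim_inl]
    exact h.injective.update_of_notMem_range _ (by rwa [Set.Sum.elim_range])
  adj j := by
    rcases eq_or_ne j i with rfl | hj
    · simpa using hub
    · simpa [hj] using h.adj j

/-- Replace the edge `a i — b i` by the two edges `u — b i` and `v — a i`. -/
theorem augment (h : G.IsMatchingPairs a b) (i : Fin k) (hu : u ∉ Set.range a ∪ Set.range b)
    (hv : v ∉ Set.range a ∪ Set.range b) (huv : u ≠ v) (hub : G.Adj u (b i))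
    (hva : G.Adj v (a i)) :
    G.IsMatchingPairs (Fin.snoc (Function.update a i u) v) (Fin.snoc b (a i)) := by
  classical
  refine (h.update i hu hub).snoc ?_ ?_ hva
  · simp only [Set.mem_union, Set.mem_range, not_or, not_exists] at hv ⊢
    refine ⟨fun j => ?_, hv.2⟩
    rcases eq_or_ne j i with rfl | hj
    · simpa using huv
    · simpa [hj] using hv.1 j
  · have hinj := h.injective
    simp only [Set.mem_union, Set.mem_range, not_or, not_exists, Sum.elim_injective]
      at hu hinj ⊢
    refine ⟨fun j => ?_, fun j => (hinj.2.2 i j).symm⟩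
    rcases eq_or_ne j i with rfl | hj
    · simpa [eq_comm] using hu.1 j
    · simpa [hj] using hinj.1.ne hj

end IsMatchingPairs

theorem degree_le_of_neighbors_mem_range [Fintype V] [DecidableRel G.Adj] {x : V}
    (hx : ∀ w, G.Adj x w → w ∈ Set.range a ∪ Set.range b) :
    G.degree x ≤ #{i | G.Adj x (a i)} + #{i | G.Adj x (b i)} := by
  classical
  calc G.degree x = #(G.neighborFinset x) := (card_neighborFinset_eq_degree G x).symm
    _ ≤ #(({i | G.Adj x (a i)} : Finset _).image a ∪
          ({i | G.Adj x (b i)} : Finset _).image b) := by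
      refine card_le_card fun w hw => ?_
      rw [mem_neighborFinset] at hw
      rcases hx w hw with ⟨i, rfl⟩ | ⟨i, rfl⟩
      · exact mem_union_left _ (mem_image_of_mem _ (mem_filter.2 ⟨mem_univ _, hw⟩))
      · exact mem_union_right _ (mem_image_of_mem _ (mem_filter.2 ⟨mem_univ _, hw⟩))
    _ ≤ _ := (card_union_le _ _).trans (add_le_add card_image_le card_image_le)

theorem exists_adj_adj_of_two_mul_lt_degree_add [Fintype V] [DecidableRel G.Adj]
    (hu : ∀ w, G.Adj u w → w ∈ Set.range a ∪ Set.range b)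
    (hv : ∀ w, G.Adj v w → w ∈ Set.range a ∪ Set.range b)
    (hdeg : 2 * k < G.degree u + G.degree v) :
    ∃ i, G.Adj u (b i) ∧ G.Adj v (a i) ∨ G.Adj u (a i) ∧ G.Adj v (b i) := by
  have hsum : ∑ _i : Fin k, 2 < ∑ i, ((if G.Adj u (a i) then 1 else 0) +
      (if G.Adj u (b i) then 1 else 0) + (if G.Adj v (a i) then 1 else 0) +
      (if G.Adj v (b i) then 1 else 0)) := by
    simp only [sum_add_distrib, ← card_filter, sum_const, card_univ, Fintype.card_fin,
      smul_eq_mul]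
    have := degree_le_of_neighbors_mem_range hu
    have := degree_le_of_neighbors_mem_range hv
    omega
  -- some matching edge receives three of the edges from `u` and `v`
  obtain ⟨i, -, hi⟩ := exists_lt_of_sum_lt hsum
  exact ⟨i, by split_ifs at hi <;> simp_all⟩

theorem IsMatchingPairs.exists_succ [Fintype V] [DecidableRel G.Adj] (h : G.IsMatchingPairs a b)
    (hcard : 2 * k + 2 ≤ Fintype.card V) (hdeg : ∀ v, k < G.degree v) :
    ∃ a' b' : Fin (k + 1) → V, G.IsMatchingPairs a' b' := by
  classical
  obtain ⟨u, hu, v, hv, huv⟩ := one_lt_card.1 <| show 1 < #(univ.image (Sum.elim a b))ᶜ by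
    have := card_image_le (s := univ) (f := Sum.elim a b)
    rw [card_compl]
    simp only [card_univ, Fintype.card_sum, Fintype.card_fin] at this
    omega
  replace hu : u ∉ Set.range a ∪ Set.range b := by simpa [or_comm] using hu
  replace hv : v ∉ Set.range a ∪ Set.range b := by simpa [or_comm] using hv
  by_cases hu' : ∃ w ∉ Set.range a ∪ Set.range b, G.Adj u w
  · obtain ⟨w, hw, huw⟩ := hu'
    exact ⟨_, _, h.snoc hu hw huw⟩
  by_cases hv' : ∃ w ∉ Set.range a ∪ Set.range b, G.Adj v w
  · obtain ⟨w, hw, hvw⟩ := hv'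
    exact ⟨_, _, h.snoc hv hw hvw⟩
  obtain ⟨i, ⟨hub, hva⟩ | ⟨hua, hvb⟩⟩ := exists_adj_adj_of_two_mul_lt_degree_add
    (fun w huw => by_contra fun hw => hu' ⟨w, hw, huw⟩)
    (fun w hvw => by_contra fun hw => hv' ⟨w, hw, hvw⟩)
    (by have := hdeg u; have := hdeg v; omega)
  · exact ⟨_, _, h.augment i hu hv huv hub hva⟩
  · rw [Set.union_comm] at hu hv
    exact ⟨_, _, h.symm.augment i hu hv huv hua hvb⟩

theorem exists_isMatchingPairs_of_le_degree [Fintype V] [DecidableRel G.Adj] {n : ℕ}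
    (hcard : 2 * n ≤ Fintype.card V) (hdeg : ∀ v, n ≤ G.degree v) :
    ∃ a b : Fin n → V, G.IsMatchingPairs a b := by
  suffices ∀ k ≤ n, ∃ a b : Fin k → V, G.IsMatchingPairs a b from this n le_rfl
  intro k hk
  induction k with
  | zero => exact ⟨Fin.elim0, Fin.elim0, Function.injective_of_subsingleton _, fun i => i.elim0⟩
  | succ k ih =>
    obtain ⟨a, b, h⟩ := ih (by omega)
    exact h.exists_succ (by omega) fun v => by have := hdeg v; omega

theorem le_degree_compl_induce [Fintype V] [DecidableRel G.Adj] (s : Set V) [Fintype s]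
    [DecidableRel (Gᶜ.induce s).Adj] (v : s) :
    Fintype.card s - 1 - G.degree v ≤ (Gᶜ.induce s).degree v := by
  classical
  have hcompl : Gᶜ.induce s = (G.induce s)ᶜ := by ext; simp [Subtype.ext_iff]
  have hle : (G.induce s).degree v ≤ G.degree v := (Copy.induce G s).degree_le v
  calc _ ≤ Fintype.card s - 1 - (G.induce s).degree v := by omega
    _ = (G.induce s)ᶜ.degree v := ((G.induce s).degree_compl v).symm
    _ = _ := by congr! 1; exact hcompl.symm

theorem exists_degree_lt_of_odd [Fintype V] [DecidableRel G.Adj] {d : ℕ}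
    (hV : Odd (Fintype.card V)) (hd : Odd d) (hle : ∀ v, G.degree v ≤ d) :
    ∃ v, G.degree v < d := by
  by_contra! h
  have hreg : ∀ v, G.degree v = d := fun v => le_antisymm (hle v) (h v)
  have hsum := G.sum_degrees_eq_twice_card_edges
  simp only [hreg, sum_const, card_univ, smul_eq_mul] at hsum
  exact Nat.not_even_iff_odd.2 (hV.mul hd) ⟨_, hsum.trans (two_mul _)⟩

end SimpleGraph

section Copies

variable {V : Type*} {G : SimpleGraph V}

theorem containsCopy_of_cons {m : ℕ} {H : SimpleGraph (Fin (m + 1))} {c : V} {g : Fin m → V}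
    (hg : Function.Injective g) (hc : ∀ i, G.Adj c (g i))
    (hH : ∀ i j, H.Adj i.succ j.succ → G.Adj (g i) (g j)) : ContainsCopy G H := by
  have hcg : c ∉ Set.range g := fun ⟨i, hi⟩ => (hc i).ne hi.symm
  refine ⟨⟨Fin.cons c g, Fin.cons_injective_iff.2 ⟨hcg, hg⟩⟩, fun p q hpq => ?_⟩
  induction p using Fin.cases <;> induction q using Fin.cases
  · exact absurd hpq (H.loopless.irrefl _)
  · simpa using hc _
  · simpa using (hc _).symm
  · simpa using hH _ _ hpq

theorem containsCopy_starGraph_of_le_degree [Fintype V] [DecidableRel G.Adj] {n : ℕ} {c : V}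
    (h : n ≤ G.degree c) : ContainsCopy G (starGraph n) := by
  obtain ⟨g⟩ := Function.Embedding.nonempty_of_card_le (α := Fin n) (β := G.neighborSet c)
    (by rwa [Fintype.card_fin, G.card_neighborSet_eq_degree])
  exact containsCopy_of_cons (Subtype.val_injective.comp g.injective) (fun i => (g i).2)
    fun i j hij => (hij.2.elim (Fin.succ_ne_zero i) (Fin.succ_ne_zero j)).elim

/-- The fan's vertex `j + 1` is the `(j % 2)`-th endpoint of the `(j / 2)`-th matching edge. -/
def fanIndex {n : ℕ} (j : Fin (2 * n)) : Fin n ⊕ Fin n :=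
  if j.val % 2 = 0 then .inl ⟨j / 2, by omega⟩ else .inr ⟨j / 2, by omega⟩

theorem fanIndex_injective {n : ℕ} : Function.Injective (fanIndex (n := n)) := by
  intro i j hij
  unfold fanIndex at hij
  split_ifs at hij <;> simp only [Sum.inl.injEq, Sum.inr.injEq, Fin.mk.injEq] at hij
  all_goals ext; omega

theorem containsCopy_fanGraph {n : ℕ} {c : V} {a b : Fin n → V} (hM : G.IsMatchingPairs a b)
    (hc : ∀ i, G.Adj c (a i) ∧ G.Adj c (b i)) : ContainsCopy G (fanGraph n) := by
  refine containsCopy_of_cons (c := c) (hM.injective.comp fanIndex_injective) (fun j => ?_)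
    fun i j hij => ?_
  · simp only [Function.comp_apply, fanIndex]; split_ifs
    exacts [(hc _).1, (hc _).2]
  · simp only [fanGraph, ne_eq, Fin.succ_inj, Fin.succ_ne_zero, Fin.val_succ, false_or,
      Nat.add_sub_cancel] at hij
    obtain ⟨hne, hdiv⟩ := hij
    have hval : i.val ≠ j.val := fun h => hne (Fin.ext h)
    simp only [Function.comp_apply, fanIndex]
    split_ifs with hi hj hj
    · omega
    · simpa [hdiv] using hM.adj _
    · simpa [hdiv] using (hM.adj _).symm
    · omega

end Copies

/-- For every even `n ≥ 2`, every red-blue coloring of `K_{3n-1}` contains a red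
`K_{1,n}` or a blue `F_n`. -/
theorem star_fan_upper_even (n : ℕ) (hn : 2 ≤ n) (heven : Even n)
    (R : SimpleGraph (Fin (3 * n - 1))) :
    ContainsCopy R (starGraph n) ∨ ContainsCopy Rᶜ (fanGraph n) := by
  classical
  by_cases hstar : ∃ v, n ≤ R.degree v
  · obtain ⟨v, hv⟩ := hstar
    exact .inl (containsCopy_starGraph_of_le_degree hv)
  push Not at hstar
  obtain ⟨m, hm⟩ := heven
  obtain ⟨c, hc⟩ := R.exists_degree_lt_of_odd (d := n - 1)
    (by rw [Fintype.card_fin]; exact ⟨3 * m - 1, by omega⟩) ⟨m - 1, by omega⟩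
    fun v => by have := hstar v; omega
  let S := Rᶜ.neighborSet c
  have hS : 2 * n ≤ Fintype.card S := by
    rw [Rᶜ.card_neighborSet_eq_degree, R.degree_compl, Fintype.card_fin]
    omega
  obtain ⟨a, b, hM⟩ := SimpleGraph.exists_isMatchingPairs_of_le_degree (G := Rᶜ.induce S) hS
    fun v => by have := R.le_degree_compl_induce S v; have := hstar v; omega
  exact .inr (containsCopy_fanGraph (hM.map (SimpleGraph.Copy.induce _ _))
    fun i => ⟨(a i).2, (b i).2⟩)
end

section
/- Let G be a complete graph on 14 vertices whose edges are red-blue colored with no monochromatic copy of the fan F_3, and let H be a set of 5 vertices inducing a blue complete graph K_5, with K = V(G) \ H. Then for any three distinct vertices v_1, v_2, v_3 of K, the sum of the numbers of blue neighbors in H of v_1, v_2, and v_3 is at most 7. -/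
/-!
Suppose two vertices `u ≠ w` outside the blue `K₅` on `H` have `a ≥ 2` and `b ≥ 3` blue
neighbours in `H`, with `a + b ≥ 6`. Their neighbourhoods then meet in some `c ∈ H`; pick a
further neighbour `h₁ ∈ H` of `u`, a neighbour `h₂ ∈ H \ {c, h₁}` of `w`, and let `h₃, h₄` be the
remaining two vertices of `H`. Then `c` together with the blue edges `u h₁`, `w h₂`, `h₃ h₄` is a
blue `F₃`. So no ordered pair of the three counts (each at most 5) has this shape, and a short
case check shows that this forces their sum to be at most 7.
-/

open Finset

theorem containsCopy_fanGraph_three {V : Type*} {G : SimpleGraph V} {c x₁ y₁ x₂ y₂ x₃ y₃ : V}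
    (hnodup : [c, x₁, y₁, x₂, y₂, x₃, y₃].Nodup)
    (hc : ∀ v ∈ [x₁, y₁, x₂, y₂, x₃, y₃], G.Adj c v)
    (h₁ : G.Adj x₁ y₁) (h₂ : G.Adj x₂ y₂) (h₃ : G.Adj x₃ y₃) :
    ContainsCopy G (fanGraph 3) := by
  refine ⟨⟨![c, x₁, y₁, x₂, y₂, x₃, y₃], List.nodup_ofFn.mp hnodup⟩, fun a b hab => ?_⟩
  simp only [List.mem_cons, List.not_mem_nil, forall_eq_or_imp, or_false, forall_eq] at hc
  have := h₁.symm; have := h₂.symm; have := h₃.symm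
  fin_cases a <;> fin_cases b <;> simp_all [fanGraph, G.adj_comm c]

theorem containsCopy_fanGraph_three_of_isClique {V : Type*} {G : SimpleGraph V}
    [DecidableRel G.Adj] {H : Finset V} (hH : G.IsClique (H : Set V)) (hH5 : 5 ≤ #H) {u w : V}
    (hu : u ∉ H) (hw : w ∉ H) (huw : u ≠ w) (hu2 : 2 ≤ #{x ∈ H | G.Adj u x})
    (hw3 : 3 ≤ #{x ∈ H | G.Adj w x})
    (hsum : #H < #{x ∈ H | G.Adj u x} + #{x ∈ H | G.Adj w x}) :
    ContainsCopy G (fanGraph 3) := by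
  classical
  obtain ⟨c, hc⟩ := inter_nonempty_of_card_lt_card_add_card
    (filter_subset _ _) (filter_subset _ _) hsum
  obtain ⟨h₁, hh₁, h₁c⟩ := exists_mem_ne (by omega : 1 < #{x ∈ H | G.Adj u x}) c
  obtain ⟨h₂, hh₂, h₂c₁⟩ := exists_mem_notMem_of_card_lt_card
    (lt_of_le_of_lt (card_le_two : #{c, h₁} ≤ 2) hw3)
  obtain ⟨h₃, hh₃, h₄, hh₄, h₃₄⟩ := one_lt_card.mp <| lt_of_lt_of_le
    (by have := card_le_three (a := c) (b := h₁) (c := h₂); omega) (le_card_sdiff {c, h₁, h₂} H)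
  simp only [mem_filter, mem_inter, mem_sdiff, mem_insert, mem_singleton, not_or] at hc hh₁ hh₂ h₂c₁ hh₃ hh₄
  obtain ⟨⟨hcH, huc⟩, -, hwc⟩ := hc
  refine containsCopy_fanGraph_three (c := c) (x₁ := u) (y₁ := h₁) (x₂ := w) (y₂ := h₂)
    (x₃ := h₃) (y₃ := h₄) ?_ ?_ hh₁.2 hh₂.2 (hH hh₃.1 hh₄.1 h₃₄)
  · simp only [List.nodup_cons, List.mem_cons, List.not_mem_nil, not_or]
    grind
  · simp only [List.mem_cons, List.not_mem_nil, forall_eq_or_imp, or_false, forall_eq]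
    exact ⟨huc.symm, hH hcH hh₁.1 (Ne.symm h₁c), hwc.symm, hH hcH hh₂.1 (Ne.symm h₂c₁.1),
      hH hcH hh₃.1 (Ne.symm hh₃.2.1), hH hcH hh₄.1 (Ne.symm hh₄.2.1)⟩

theorem blue_nbhd_sum_le_seven_general (R : SimpleGraph (Fin 14))
    (hblue : ¬ ContainsCopy Rᶜ (fanGraph 3))
    (H : Finset (Fin 14)) (hH : H.card = 5)
    (hK5 : ∀ a ∈ H, ∀ b ∈ H, a ≠ b → Rᶜ.Adj a b)
    (v₁ v₂ v₃ : Fin 14) (hv₁ : v₁ ∉ H) (hv₂ : v₂ ∉ H) (hv₃ : v₃ ∉ H)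
    (h12 : v₁ ≠ v₂) (h13 : v₁ ≠ v₃) (h23 : v₂ ≠ v₃) :
    {h : Fin 14 | h ∈ H ∧ Rᶜ.Adj v₁ h}.ncard + {h : Fin 14 | h ∈ H ∧ Rᶜ.Adj v₂ h}.ncard +
      {h : Fin 14 | h ∈ H ∧ Rᶜ.Adj v₃ h}.ncard ≤ 7 := by
  classical
  have hcard (v : Fin 14) : {h | h ∈ H ∧ Rᶜ.Adj v h}.ncard = #{h ∈ H | Rᶜ.Adj v h} := by
    rw [← coe_filter, Set.ncard_coe_finset]
  have hle (v : Fin 14) : #{h ∈ H | Rᶜ.Adj v h} ≤ 5 := hH ▸ card_filter_le _ _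
  have hpair (u w : Fin 14) (hu : u ∉ H) (hw : w ∉ H) (huw : u ≠ w) :
      #{h ∈ H | Rᶜ.Adj u h} ≤ 1 ∨ #{h ∈ H | Rᶜ.Adj w h} ≤ 2 ∨
        #{h ∈ H | Rᶜ.Adj u h} + #{h ∈ H | Rᶜ.Adj w h} ≤ 5 := by
    by_contra! h
    exact hblue <| containsCopy_fanGraph_three_of_isClique (fun a ha b hb hab => hK5 a ha b hb hab)
      hH.ge hu hw huw h.1 h.2.1 (by omega)
  rw [hcard, hcard, hcard]
  have := hpair v₁ v₂ hv₁ hv₂ h12; have := hpair v₂ v₁ hv₂ hv₁ h12.symm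
  have := hpair v₁ v₃ hv₁ hv₃ h13; have := hpair v₃ v₁ hv₃ hv₁ h13.symm
  have := hpair v₂ v₃ hv₂ hv₃ h23; have := hpair v₃ v₂ hv₃ hv₂ h23.symm
  have := hle v₁; have := hle v₂; have := hle v₃
  omega

/-- In a red-blue coloring of `K₁₄` with no monochromatic `F₃` and a blue `K₅` on
a 5-set `H`: for any three distinct vertices outside `H`, the sum of their
numbers of blue neighbors in `H` is at most 7. -/
theorem blue_nbhd_sum_le_seven (R : SimpleGraph (Fin 14))
    (hred : ¬ ContainsCopy R (fanGraph 3)) (hblue : ¬ ContainsCopy Rᶜ (fanGraph 3))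
    (H : Finset (Fin 14)) (hH : H.card = 5)
    (hK5 : ∀ a ∈ H, ∀ b ∈ H, a ≠ b → Rᶜ.Adj a b)
    (v₁ v₂ v₃ : Fin 14) (hv₁ : v₁ ∉ H) (hv₂ : v₂ ∉ H) (hv₃ : v₃ ∉ H)
    (h12 : v₁ ≠ v₂) (h13 : v₁ ≠ v₃) (h23 : v₂ ≠ v₃) :
    {h : Fin 14 | h ∈ H ∧ Rᶜ.Adj v₁ h}.ncard + {h : Fin 14 | h ∈ H ∧ Rᶜ.Adj v₂ h}.ncard +
      {h : Fin 14 | h ∈ H ∧ Rᶜ.Adj v₃ h}.ncard ≤ 7 :=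
  blue_nbhd_sum_le_seven_general R hblue H hH hK5 v₁ v₂ v₃ hv₁ hv₂ hv₃ h12 h13 h23
end
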